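/- Let N ≥ 4 and define (Λ y)(x) = x(1-x) y''(x) + ( (5/2)(1-x) - (N/2)x ) y'(x). If y ∈ C²((0,1)) satisfies ∫₀¹ y² x^{3/2}(1-x)^{N/2-1} dx < ∞, ∫₀¹ x(1-x) (y')² x^{3/2}(1-x)^{N/2-1} dx < ∞, and ∫₀¹ (Λy)² x^{3/2}(1-x)^{N/2-1} dx < ∞, then there exists a constant C > 0 such that | x^{5/2} (1-x)^{N/2} y'(x) | ≤ C x^{5/4} (1-x)^{N/4} for all x ∈ (0,1). -/

import Mathlib

open Real MeasureTheory Set Filter Topology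

/-- `Λ y = x(1-x) y'' + ((5/2)(1-x) - (N/2)x) y'`. -/
noncomputable def Lam (N : ℝ) (y : ℝ → ℝ) : ℝ → ℝ := fun x =>
  x*(1-x) * deriv (deriv y) x + ((5/2)*(1-x) - (N/2)*x) * deriv y x

/-!
With `w = x^{3/2}(1-x)^{N/2-1}`, the function `F = x^{5/2}(1-x)^{N/2} y'` satisfies
`F' = w Λy`, so `|F x - F a| ≤ ∫ w |Λy|` between `a` and `x`. Since
`F² ≤ min(x, 1-x) · x(1-x) y'² w` and the last factor is integrable, `F` takes arbitrarily
small values arbitrarily close to either endpoint (otherwise `1/x` or `1/(1-x)` would be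
integrable there). Letting `a → 0` and bounding `∫ w |Λy|` by Cauchy–Schwarz with
`∫₀ˣ w ≤ x^{5/2}` gives `|F x| ≲ x^{5/4}`; letting `a → 1` with `∫ₓ¹ w ≤ (1-x)^{N/2}` gives
`|F x| ≲ (1-x)^{N/4}`. Each bound wins on one half of `(0,1)`.
-/

theorem abs_le_setIntegral_abs_of_forall_exists_abs_le {F f : ℝ → ℝ} {s : Set ℝ} {x : ℝ}
    (hs : s.OrdConnected) (hx : x ∈ s) (hF : ∀ t ∈ s, HasDerivAt F (f t) t)
    (hf : IntegrableOn f s) (hsmall : ∀ ε > 0, ∃ t ∈ s, |F t| ≤ ε) :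
    |F x| ≤ ∫ t in s, |f t| := by
  refine le_of_forall_pos_le_add fun ε hε => ?_
  obtain ⟨a, ha, hFa⟩ := hsmall ε hε
  have hFTC : ∫ t in a..x, f t = F x - F a :=
    intervalIntegral.integral_eq_sub_of_hasDerivAt (fun t ht => hF t (hs.uIcc_subset ha hx ht))
      (hf.mono_set (hs.uIcc_subset ha hx)).intervalIntegrable
  have hvar : |F x - F a| ≤ ∫ t in s, |f t| := by
    rw [← hFTC]
    calc |∫ t in a..x, f t| ≤ ∫ t in uIoc a x, |f t| := by
          simpa only [Real.norm_eq_abs] using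
            intervalIntegral.norm_integral_le_integral_norm_uIoc (f := f) (μ := volume)
      _ ≤ ∫ t in s, |f t| :=
          setIntegral_mono_set hf.abs (.of_forall fun _ => abs_nonneg _)
            (hs.uIoc_subset ha hx).eventuallyLE
  linarith [abs_sub_abs_le_abs_sub (F x) (F a)]

theorem exists_abs_le_of_sq_le_abs_sub_mul {F G : ℝ → ℝ} {a b c ε : ℝ} (hab : a < b)
    (hc : c ∈ Icc a b) (hG : IntegrableOn G (Ioo a b))
    (hFG : ∀ t ∈ Ioo a b, F t ^ 2 ≤ |t - c| * G t) (hε : 0 < ε) :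
    ∃ t ∈ Ioo a b, |F t| ≤ ε := by
  by_contra! hlarge
  -- otherwise `|t - c|⁻¹ ≤ ε⁻² G t` on `(a, b)`, and `(t - c)⁻¹` is not integrable there
  have hinv : IntegrableOn (fun t => (t - c)⁻¹) (Ioo a b) := by
    refine (hG.const_mul (ε ^ 2)⁻¹).mono' (by fun_prop) ?_
    filter_upwards [ae_restrict_mem measurableSet_Ioo] with t ht
    have hF : ε ^ 2 < |t - c| * G t :=
      (sq_lt_sq' (by linarith [abs_nonneg (F t), hlarge t ht]) (hlarge t ht)).trans_le
        (by simpa [sq_abs] using hFG t ht)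
    have hpos : 0 < |t - c| := by
      refine (abs_nonneg _).lt_of_ne fun h => ?_
      rw [← h, zero_mul] at hF
      nlinarith
    rw [norm_inv, Real.norm_eq_abs, inv_le_iff_one_le_mul₀' hpos,
      show |t - c| * ((ε ^ 2)⁻¹ * G t) = |t - c| * G t / ε ^ 2 by ring,
      one_le_div (by positivity)]
    exact hF.le
  have := (intervalIntegrable_iff_integrableOn_Ioo_of_le hab.le).2 hinv
  rw [intervalIntegrable_sub_inv_iff] at this
  exact this.elim hab.ne fun h => h (Icc_subset_uIcc hc)

theorem integrable_mul_of_integrable_sq_mul {α : Type*} [MeasurableSpace α] {μ : Measure α}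
    {w g : α → ℝ} (hw : 0 ≤ᵐ[μ] w) (hwi : Integrable w μ)
    (hgw : Integrable (fun t => g t ^ 2 * w t) μ) (hg : AEStronglyMeasurable g μ) :
    Integrable (fun t => w t * g t) μ := by
  refine ((hwi.add hgw).div_const 2).mono' (hwi.aestronglyMeasurable.mul hg) ?_
  filter_upwards [hw] with t (ht : 0 ≤ w t)
  rw [Pi.add_apply, Real.norm_eq_abs, abs_mul, abs_of_nonneg ht]
  nlinarith [mul_nonneg ht (sq_nonneg (|g t| - 1)), sq_abs (g t)]

theorem integral_mul_abs_le_of_integral_le {α : Type*} [MeasurableSpace α] {μ : Measure α}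
    {w g : α → ℝ} {A δ : ℝ} (hw : 0 ≤ᵐ[μ] w) (hwi : Integrable w μ)
    (hgw : Integrable (fun t => g t ^ 2 * w t) μ) (hδ : 0 < δ)
    (hA : ∫ t, g t ^ 2 * w t ∂μ ≤ A) (hW : ∫ t, w t ∂μ ≤ δ ^ 2) :
    ∫ t, w t * |g t| ∂μ ≤ (A + 1) / 2 * δ := by
  -- AM-GM: `w |g| ≤ (δ / 2) g² w + w / (2 δ)`
  have hpt : ∀ᵐ t ∂μ, w t * |g t| ≤ δ / 2 * (g t ^ 2 * w t) + (2 * δ)⁻¹ * w t := by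
    filter_upwards [hw] with t (ht : 0 ≤ w t)
    have := mul_nonneg ht (sq_nonneg (δ * |g t| - 1))
    rw [← sub_nonneg]
    have e : δ / 2 * (g t ^ 2 * w t) + (2 * δ)⁻¹ * w t - w t * |g t|
        = (2 * δ)⁻¹ * (w t * (δ * |g t| - 1) ^ 2) := by
      field_simp
      rw [← sq_abs (g t)]
      ring
    rw [e]
    positivity
  calc ∫ t, w t * |g t| ∂μ
      ≤ ∫ t, (δ / 2 * (g t ^ 2 * w t) + (2 * δ)⁻¹ * w t) ∂μ :=
        integral_mono_of_nonneg (by filter_upwards [hw] with t (ht : 0 ≤ w t); positivity)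
          ((hgw.const_mul _).add (hwi.const_mul _)) hpt
    _ = δ / 2 * ∫ t, g t ^ 2 * w t ∂μ + (2 * δ)⁻¹ * ∫ t, w t ∂μ := by
        rw [integral_add (hgw.const_mul _) (hwi.const_mul _), integral_const_mul,
          integral_const_mul]
    _ ≤ δ / 2 * A + (2 * δ)⁻¹ * δ ^ 2 := by gcongr
    _ = (A + 1) / 2 * δ := by field_simp

theorem min_rpow_le_mul_rpow {x p q : ℝ} (hx : x ∈ Icc 0 1) (hp : 0 ≤ p) (hq : 0 ≤ q) :
    min (x ^ p) ((1 - x) ^ q) ≤ 2 ^ (p + q) * (x ^ p * (1 - x) ^ q) := by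
  have h1x : 0 ≤ 1 - x := sub_nonneg.2 hx.2
  rcases le_total x (1/2) with hx2 | hx2
  · calc min (x ^ p) ((1 - x) ^ q) ≤ x ^ p := min_le_left _ _
      _ ≤ x ^ p * (2 ^ p * (2 * (1 - x)) ^ q) :=
          le_mul_of_one_le_right (rpow_nonneg hx.1 _)
            (one_le_mul_of_one_le_of_one_le (one_le_rpow one_le_two hp)
              (one_le_rpow (by linarith) hq))
      _ = _ := by rw [mul_rpow zero_le_two h1x, rpow_add two_pos]; ring
  · calc min (x ^ p) ((1 - x) ^ q) ≤ (1 - x) ^ q := min_le_right _ _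
      _ ≤ (1 - x) ^ q * ((2 * x) ^ p * 2 ^ q) :=
          le_mul_of_one_le_right (rpow_nonneg h1x _)
            (one_le_mul_of_one_le_of_one_le (one_le_rpow (by linarith) hp)
              (one_le_rpow one_le_two hq))
      _ = _ := by rw [mul_rpow zero_le_two hx.1, rpow_add two_pos]; ring

-- the density of the measure defining the space `𝔛`
noncomputable def weight (N t : ℝ) : ℝ := t ^ ((3:ℝ)/2) * (1-t) ^ (N/2 - 1)

noncomputable def flux (N : ℝ) (y : ℝ → ℝ) (t : ℝ) : ℝ :=
  t ^ ((5:ℝ)/2) * (1-t) ^ (N/2) * deriv y t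

section weight

variable {N t : ℝ}

theorem weight_nonneg (ht : t ∈ Icc 0 1) : 0 ≤ weight N t :=
  mul_nonneg (rpow_nonneg ht.1 _) (rpow_nonneg (sub_nonneg.2 ht.2) _)

theorem weight_le_rpow_of_le {x : ℝ} (hN : 2 ≤ N) (ht : t ∈ Icc 0 x) (hx : x ≤ 1) :
    weight N t ≤ x ^ ((3:ℝ)/2) :=
  (mul_le_of_le_one_right (rpow_nonneg ht.1 _)
    (rpow_le_one (by linarith [ht.2]) (by linarith [ht.1]) (by linarith))).trans
    (rpow_le_rpow ht.1 ht.2 (by norm_num))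

theorem weight_le_rpow_of_ge {x : ℝ} (hN : 2 ≤ N) (ht : t ∈ Icc x 1) (hx : 0 ≤ x) :
    weight N t ≤ (1 - x) ^ (N/2 - 1) :=
  (mul_le_of_le_one_left (rpow_nonneg (by linarith [ht.2]) _)
    (rpow_le_one (by linarith [ht.1]) ht.2 (by norm_num))).trans
    (rpow_le_rpow (by linarith [ht.2]) (by linarith [ht.1]) (by linarith))

theorem weight_le_one (hN : 2 ≤ N) (ht : t ∈ Icc 0 1) : weight N t ≤ 1 := by
  simpa using weight_le_rpow_of_le hN ht le_rfl

theorem measurable_weight : Measurable (weight N) := by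
  unfold weight; fun_prop

theorem integrableOn_weight (hN : 2 ≤ N) : IntegrableOn (weight N) (Ioo 0 1) :=
  .of_bound measure_Ioo_lt_top measurable_weight.aestronglyMeasurable 1 <|
    (ae_restrict_mem measurableSet_Ioo).mono fun t ht => by
      rw [Real.norm_eq_abs, abs_of_nonneg (weight_nonneg (Ioo_subset_Icc_self ht))]
      exact weight_le_one hN (Ioo_subset_Icc_self ht)

theorem rpow_five_halves_eq_mul (ht : t ≠ 0) : t ^ ((5:ℝ)/2) = t ^ ((3:ℝ)/2) * t := by
  rw [← rpow_add_one ht]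
  norm_num

theorem one_sub_rpow_half_eq_mul (ht : t ≠ 1) :
    (1-t) ^ (N/2) = (1-t) ^ (N/2 - 1) * (1-t) := by
  rw [← rpow_add_one (sub_ne_zero.2 ht.symm), sub_add_cancel]

theorem rpow_five_halves_mul_rpow_eq (ht : t ∈ Ioo 0 1) :
    t ^ ((5:ℝ)/2) * (1-t) ^ (N/2) = t * (1-t) * weight N t := by
  rw [rpow_five_halves_eq_mul ht.1.ne', one_sub_rpow_half_eq_mul ht.2.ne, weight]
  ring

theorem hasDerivAt_rpow_five_halves_mul_rpow (ht : t ∈ Ioo 0 1) :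
    HasDerivAt (fun s => s ^ ((5:ℝ)/2) * (1-s) ^ (N/2))
      (weight N t * ((5/2) * (1-t) - (N/2) * t)) t := by
  have hl := hasDerivAt_rpow_const (p := (5:ℝ)/2) (Or.inl ht.1.ne')
  have hr := (hasDerivAt_rpow_const (p := N/2) (Or.inl (sub_pos.2 ht.2).ne')).comp t
    ((hasDerivAt_id t).const_sub 1)
  refine (hl.mul hr).congr_deriv ?_
  rw [Function.comp_apply, show (5:ℝ)/2 - 1 = 3/2 by norm_num, rpow_five_halves_eq_mul ht.1.ne',
    one_sub_rpow_half_eq_mul ht.2.ne, weight]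
  ring

end weight

theorem hasDerivAt_flux {N : ℝ} {y : ℝ → ℝ} (hy : ContDiffOn ℝ 2 y (Ioo 0 1)) {t : ℝ}
    (ht : t ∈ Ioo 0 1) : HasDerivAt (flux N y) (weight N t * Lam N y t) t := by
  have hy' : HasDerivAt (deriv y) (deriv (deriv y) t) t :=
    (((hy.deriv_of_isOpen (m := 1) isOpen_Ioo (by norm_num)).differentiableOn
      (by norm_num)).differentiableAt (isOpen_Ioo.mem_nhds ht)).hasDerivAt
  refine ((hasDerivAt_rpow_five_halves_mul_rpow ht).mul hy').congr_deriv ?_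
  rw [rpow_five_halves_mul_rpow_eq ht, Lam]
  ring

theorem flux_sq_le {N : ℝ} (hN : 2 ≤ N) (y : ℝ → ℝ) {t c : ℝ} (ht : t ∈ Ioo 0 1)
    (hc : c = 0 ∨ c = 1) :
    flux N y t ^ 2 ≤ |t - c| * (t * (1-t) * deriv y t ^ 2 * weight N t) := by
  have hw0 := weight_nonneg (N := N) (Ioo_subset_Icc_self ht)
  have hw1 := weight_le_one hN (Ioo_subset_Icc_self ht)
  have hG : 0 ≤ t * (1-t) * deriv y t ^ 2 * weight N t := by
    have := ht.1; have := sub_pos.2 ht.2; positivity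
  have hc' : t * (1-t) * weight N t ≤ |t - c| := by
    obtain ⟨ht0, ht1⟩ := ht
    rcases hc with rfl | rfl
    · rw [sub_zero, abs_of_pos ht0, mul_assoc]
      exact mul_le_of_le_one_right ht0.le (mul_le_one₀ (by linarith) hw0 hw1)
    · rw [abs_sub_comm, abs_of_pos (sub_pos.2 ht1), mul_comm t, mul_assoc]
      exact mul_le_of_le_one_right (sub_pos.2 ht1).le (mul_le_one₀ ht1.le hw0 hw1)
  calc flux N y t ^ 2 = t * (1-t) * weight N t * (t * (1-t) * deriv y t ^ 2 * weight N t) := by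
        rw [flux, rpow_five_halves_mul_rpow_eq ht]; ring
    _ ≤ |t - c| * (t * (1-t) * deriv y t ^ 2 * weight N t) := by gcongr

theorem measurable_Lam (N : ℝ) (y : ℝ → ℝ) : Measurable (Lam N y) := by
  have := measurable_deriv y
  have := measurable_deriv (deriv y)
  unfold Lam
  fun_prop

section bounds

variable {N : ℝ} {y : ℝ → ℝ}

theorem abs_flux_le_of_setIntegral_weight_le (hN : 2 ≤ N) (hy : ContDiffOn ℝ 2 y (Ioo 0 1))
    (hLam : IntegrableOn (fun t => Lam N y t ^ 2 * weight N t) (Ioo 0 1))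
    {s : Set ℝ} (hs : s.OrdConnected) (hs01 : s ⊆ Ioo 0 1) {x δ : ℝ} (hx : x ∈ s)
    (hsmall : ∀ ε > 0, ∃ t ∈ s, |flux N y t| ≤ ε) (hδ : 0 < δ)
    (hW : ∫ t in s, weight N t ≤ δ ^ 2) :
    |flux N y x| ≤ ((∫ t in Ioo 0 1, Lam N y t ^ 2 * weight N t) + 1) / 2 * δ := by
  have hw0 : ∀ t ∈ s, 0 ≤ weight N t := fun t ht =>
    weight_nonneg (Ioo_subset_Icc_self (hs01 ht))
  have hw0ae : 0 ≤ᵐ[volume.restrict s] weight N := (ae_restrict_mem hs.measurableSet).mono hw0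
  have hw : IntegrableOn (weight N) s := (integrableOn_weight hN).mono_set hs01
  have hLam' : IntegrableOn (fun t => Lam N y t ^ 2 * weight N t) s := hLam.mono_set hs01
  calc |flux N y x| ≤ ∫ t in s, |weight N t * Lam N y t| :=
        abs_le_setIntegral_abs_of_forall_exists_abs_le hs hx
          (fun t ht => hasDerivAt_flux hy (hs01 ht))
          (integrable_mul_of_integrable_sq_mul hw0ae hw hLam'
            (measurable_Lam N y).aestronglyMeasurable) hsmall
    _ = ∫ t in s, weight N t * |Lam N y t| :=
        setIntegral_congr_fun hs.measurableSet fun t ht => by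
          rw [abs_mul, abs_of_nonneg (hw0 t ht)]
    _ ≤ _ :=
        integral_mul_abs_le_of_integral_le hw0ae hw hLam' hδ
          (setIntegral_mono_set hLam
            ((ae_restrict_mem measurableSet_Ioo).mono fun t ht =>
              mul_nonneg (sq_nonneg _) (weight_nonneg (Ioo_subset_Icc_self ht)))
            hs01.eventuallyLE) hW

theorem setIntegral_weight_Ioc_le (hN : 2 ≤ N) {x : ℝ} (hx : x ∈ Ioo 0 1) :
    ∫ t in Ioc 0 x, weight N t ≤ (x ^ ((5:ℝ)/4)) ^ 2 := by
  have hbound : ∀ t ∈ Ioc 0 x, ‖weight N t‖ ≤ x ^ ((3:ℝ)/2) := fun t ht => by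
    rw [Real.norm_eq_abs, abs_of_nonneg (weight_nonneg ⟨ht.1.le, ht.2.trans hx.2.le⟩)]
    exact weight_le_rpow_of_le hN (Ioc_subset_Icc_self ht) hx.2.le
  calc ∫ t in Ioc 0 x, weight N t ≤ x ^ ((3:ℝ)/2) * volume.real (Ioc 0 x) :=
        (le_abs_self _).trans (norm_setIntegral_le_of_norm_le_const measure_Ioc_lt_top hbound)
    _ = (x ^ ((5:ℝ)/4)) ^ 2 := by
        rw [volume_real_Ioc_of_le hx.1.le, sub_zero, ← rpow_five_halves_eq_mul hx.1.ne',
          ← rpow_mul_natCast hx.1.le]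
        norm_num

theorem setIntegral_weight_Ico_le (hN : 2 ≤ N) {x : ℝ} (hx : x ∈ Ioo 0 1) :
    ∫ t in Ico x 1, weight N t ≤ ((1 - x) ^ (N/4)) ^ 2 := by
  have hbound : ∀ t ∈ Ico x 1, ‖weight N t‖ ≤ (1 - x) ^ (N/2 - 1) := fun t ht => by
    rw [Real.norm_eq_abs, abs_of_nonneg (weight_nonneg ⟨hx.1.le.trans ht.1, ht.2.le⟩)]
    exact weight_le_rpow_of_ge hN (Ico_subset_Icc_self ht) hx.1.le
  calc ∫ t in Ico x 1, weight N t ≤ (1 - x) ^ (N/2 - 1) * volume.real (Ico x 1) :=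
        (le_abs_self _).trans (norm_setIntegral_le_of_norm_le_const measure_Ico_lt_top hbound)
    _ = ((1 - x) ^ (N/4)) ^ 2 := by
        rw [volume_real_Ico_of_le hx.2.le, ← one_sub_rpow_half_eq_mul hx.2.ne,
          ← rpow_mul_natCast (sub_pos.2 hx.2).le]
        ring_nf

theorem abs_flux_le_left (hN : 2 ≤ N) (hy : ContDiffOn ℝ 2 y (Ioo 0 1))
    (hderiv : IntegrableOn (fun t => t * (1-t) * deriv y t ^ 2 * weight N t) (Ioo 0 1))
    (hLam : IntegrableOn (fun t => Lam N y t ^ 2 * weight N t) (Ioo 0 1))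
    {x : ℝ} (hx : x ∈ Ioo 0 1) :
    |flux N y x| ≤
      ((∫ t in Ioo 0 1, Lam N y t ^ 2 * weight N t) + 1) / 2 * x ^ ((5:ℝ)/4) := by
  refine abs_flux_le_of_setIntegral_weight_le hN hy hLam ordConnected_Ioc
    (Ioc_subset_Ioo_right hx.2) ⟨hx.1, le_rfl⟩ (fun ε hε => ?_) (rpow_pos_of_pos hx.1 _)
    (setIntegral_weight_Ioc_le hN hx)
  obtain ⟨t, ht, hsmall⟩ := exists_abs_le_of_sq_le_abs_sub_mul hx.1 (left_mem_Icc.2 hx.1.le)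
    (hderiv.mono_set (Ioo_subset_Ioo_right hx.2.le))
    (fun t ht => flux_sq_le hN y ⟨ht.1, ht.2.trans hx.2⟩ (Or.inl rfl)) hε
  exact ⟨t, Ioo_subset_Ioc_self ht, hsmall⟩

theorem abs_flux_le_right (hN : 2 ≤ N) (hy : ContDiffOn ℝ 2 y (Ioo 0 1))
    (hderiv : IntegrableOn (fun t => t * (1-t) * deriv y t ^ 2 * weight N t) (Ioo 0 1))
    (hLam : IntegrableOn (fun t => Lam N y t ^ 2 * weight N t) (Ioo 0 1))
    {x : ℝ} (hx : x ∈ Ioo 0 1) :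
    |flux N y x| ≤
      ((∫ t in Ioo 0 1, Lam N y t ^ 2 * weight N t) + 1) / 2 * (1 - x) ^ (N/4) := by
  refine abs_flux_le_of_setIntegral_weight_le hN hy hLam ordConnected_Ico
    (Ico_subset_Ioo_left hx.1) ⟨le_rfl, hx.2⟩ (fun ε hε => ?_)
    (rpow_pos_of_pos (sub_pos.2 hx.2) _)
    (setIntegral_weight_Ico_le hN hx)
  obtain ⟨t, ht, hsmall⟩ := exists_abs_le_of_sq_le_abs_sub_mul hx.2 (right_mem_Icc.2 hx.2.le)
    (hderiv.mono_set (Ioo_subset_Ioo_left hx.1.le))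
    (fun t ht => flux_sq_le hN y ⟨hx.1.trans ht.1, ht.2⟩ (Or.inr rfl)) hε
  exact ⟨t, Ioo_subset_Ico_self ht, hsmall⟩

end bounds

theorem pointwise_derivative_bound_X2_general (N : ℝ) (hN : 4 ≤ N) (y : ℝ → ℝ)
    (hy : ContDiffOn ℝ 2 y (Ioo 0 1))
    (hyX1 : IntegrableOn
      (fun x => (x*(1-x)) * (deriv y x)^2 * (x ^ ((3:ℝ)/2) * (1-x) ^ (N/2 - 1)))
      (Ioo 0 1))
    (hyX2 : IntegrableOn
      (fun x => (Lam N y x)^2 * (x ^ ((3:ℝ)/2) * (1-x) ^ (N/2 - 1))) (Ioo 0 1)) :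
    ∃ C > 0, ∀ x ∈ Ioo (0:ℝ) 1,
      |x ^ ((5:ℝ)/2) * (1-x) ^ (N/2) * deriv y x|
        ≤ C * x ^ ((5:ℝ)/4) * (1-x) ^ (N/4) := by
  have hN2 : 2 ≤ N := by linarith
  set B := ((∫ t in Ioo 0 1, Lam N y t ^ 2 * weight N t) + 1) / 2
  have hB : 0 < B := by
    have : 0 ≤ ∫ t in Ioo 0 1, Lam N y t ^ 2 * weight N t :=
      setIntegral_nonneg measurableSet_Ioo fun t ht =>
        mul_nonneg (sq_nonneg _) (weight_nonneg (Ioo_subset_Icc_self ht))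
    positivity
  refine ⟨B * 2 ^ ((5:ℝ)/4 + N/4), by positivity, fun x hx => ?_⟩
  calc |flux N y x| ≤ B * min (x ^ ((5:ℝ)/4)) ((1 - x) ^ (N/4)) :=
by
        rw [mul_min_of_nonneg _ _ hB.le]
        exact le_min (abs_flux_le_left hN2 hy hyX1 hyX2 hx) (abs_flux_le_right hN2 hy hyX1 hyX2 hx)
    _ ≤ B * (2 ^ ((5:ℝ)/4 + N/4) * (x ^ ((5:ℝ)/4) * (1 - x) ^ (N/4))) := by
        gcongr
        exact min_rpow_le_mul_rpow (Ioo_subset_Icc_self hx) (by norm_num) (by linarith)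
    _ = B * 2 ^ ((5:ℝ)/4 + N/4) * x ^ ((5:ℝ)/4) * (1 - x) ^ (N/4) := by ring

/-- Pointwise derivative bound for functions in the weighted space
`𝔛² = {y : y, √(x(1-x)) y', Λy ∈ L²((0,1), x^{3/2}(1-x)^{N/2-1} dx)}`:
`|x^{5/2}(1-x)^{N/2} y'(x)| ≤ C x^{5/4}(1-x)^{N/4}`. -/
theorem pointwise_derivative_bound_X2 (N : ℝ) (hN : 4 ≤ N) (y : ℝ → ℝ)
    (hy : ContDiffOn ℝ 2 y (Ioo 0 1))
    (hyX : IntegrableOn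
      (fun x => y x^2 * (x ^ ((3:ℝ)/2) * (1-x) ^ (N/2 - 1))) (Ioo 0 1))
    (hyX1 : IntegrableOn
      (fun x => (x*(1-x)) * (deriv y x)^2 * (x ^ ((3:ℝ)/2) * (1-x) ^ (N/2 - 1)))
      (Ioo 0 1))
    (hyX2 : IntegrableOn
      (fun x => (Lam N y x)^2 * (x ^ ((3:ℝ)/2) * (1-x) ^ (N/2 - 1))) (Ioo 0 1)) :
    ∃ C > 0, ∀ x ∈ Ioo (0:ℝ) 1,
      |x ^ ((5:ℝ)/2) * (1-x) ^ (N/2) * deriv y x|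
        ≤ C * x ^ ((5:ℝ)/4) * (1-x) ^ (N/4) :=
  pointwise_derivative_bound_X2_general N hN y hy hyX1 hyX2
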